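/- arXiv:1004.2891 — 3 statements merged into one kernel-verified Lean document; each statement's English description precedes it below -/
import Mathlib

section
/- Let G = (V, W, E) be an instance of Label Cover with a total labeling l : V ∪ W → (finite nonempty sets of labels) satisfying every edge, such that every vertex receives exactly one label (|l(x)| = 1 for all x). In the derived graph G' (with components G_{v,w} replacing each edge, a root s joined to all v ∈ V by dummy edges), selecting from each component G_{v,w} the unique label edge (v, u^{v,w}_{a,b}) with a ∈ l(v), b ∈ l(w), together with enough dummy edges, yields a spanning tree T of G' containing no two label-distinct label edges, hence with ∑_{e∈T} c^S_e ≤ 1 for every scenario S. -/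
/-!
Every edge of `T` carries the labels `l v` and `l' w` of its endpoints, so two edges of `T`
sharing a vertex of `G` also share the label of that vertex and cannot be label-distinct.
Hence `T` contains at most one edge of any scenario.
-/

/-- A label edge of the derived graph `G'`: the pair of an edge `(v,w)` of the
bipartite Label Cover instance and a label pair `(a,b)`; it corresponds to the
edge `(v, u^{v,w}_{a,b})` of the component `G_{v,w}`. -/
def LabelEdge (V W : Type) : Type := (V × W) × (ℕ × ℕ)

/-- Two label edges are label-distinct if they do not assign the same label to any
vertex: `(a = a' → v ≠ v')` and `(b = b' → w ≠ w')`. -/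
def LabelDistinct {V W : Type} (e e' : LabelEdge V W) : Prop :=
  (e.2.1 = e'.2.1 → e.1.1 ≠ e'.1.1) ∧ (e.2.2 = e'.2.2 → e.1.2 ≠ e'.1.2)

/-- A label edge `(v, u^{v,w}_{a,b})` is labeled by `(l, l')` when `a = l v` and `b = l' w`. -/
def LabelEdge.IsLabeledBy {V W : Type} (l : V → ℕ) (l' : W → ℕ) (e : LabelEdge V W) : Prop :=
  e.2 = (l e.1.1, l' e.1.2)

namespace LabelEdge

variable {V W : Type} {l : V → ℕ} {l' : W → ℕ} {e e' : LabelEdge V W}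

theorem isLabeledBy_of_mem_image {E : Finset (V × W)} [DecidableEq ((V × W) × ℕ × ℕ)]
    (he : e ∈ E.image (β := (V × W) × ℕ × ℕ) fun p => ((p.1, p.2), (l p.1, l' p.2))) :
    e.IsLabeledBy l l' := by
  obtain ⟨p, -, rfl⟩ := (Finset.mem_image (β := (V × W) × ℕ × ℕ)).mp he
  rfl

theorem not_labelDistinct_of_fst_eq (he : e.IsLabeledBy l l') (he' : e'.IsLabeledBy l l')
    (h : e.1.1 = e'.1.1) : ¬LabelDistinct e e' :=
  fun hd => hd.1 (by rw [he, he', h]) h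

theorem not_labelDistinct_of_snd_eq (he : e.IsLabeledBy l l') (he' : e'.IsLabeledBy l l')
    (h : e.1.2 = e'.1.2) : ¬LabelDistinct e e' :=
  fun hd => hd.2 (by rw [he, he', h]) h

theorem eq_of_isLabeledBy_of_mem_scenario {S : Finset (LabelEdge V W)}
    (hdistinct : ∀ e ∈ S, ∀ e' ∈ S, e ≠ e' → LabelDistinct e e')
    (hshare : (∃ v : V, ∀ e ∈ S, e.1.1 = v) ∨ (∃ w : W, ∀ e ∈ S, e.1.2 = w))
    (hS : e ∈ S) (hS' : e' ∈ S) (he : e.IsLabeledBy l l') (he' : e'.IsLabeledBy l l') :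
    e = e' := by
  by_contra hne
  have hd := hdistinct e hS e' hS' hne
  rcases hshare with ⟨v, hv⟩ | ⟨w, hw⟩
  · exact not_labelDistinct_of_fst_eq he he' ((hv e hS).trans (hv e' hS').symm) hd
  · exact not_labelDistinct_of_snd_eq he he' ((hw e hS).trans (hw e' hS').symm) hd

end LabelEdge

open Classical in
theorem stmt_16_general {V W : Type} [DecidableEq V] [DecidableEq W]
    (E : Finset (V × W))
    (l : V → ℕ) (l' : W → ℕ)
    (T : Finset (LabelEdge V W))
    (hT : T = E.image (fun p => ((p.1, p.2), (l p.1, l' p.2))))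
    (S : Finset (LabelEdge V W))
    (hdistinct : ∀ e ∈ S, ∀ e' ∈ S, e ≠ e' → LabelDistinct e e')
    (hshare : (∃ v : V, ∀ e ∈ S, e.1.1 = v) ∨ (∃ w : W, ∀ e ∈ S, e.1.2 = w)) :
    ∑ e ∈ T, (if e ∈ S then (1 : ℝ) else 0) ≤ 1 := by
  rw [Finset.sum_boole]
  norm_cast
  refine Finset.card_le_one.mpr fun e he e' he' => ?_
  rw [Finset.mem_filter, hT] at he he'
  exact LabelEdge.eq_of_isLabeledBy_of_mem_scenario hdistinct hshare he.2 he'.2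
    (LabelEdge.isLabeledBy_of_mem_image he.1) (LabelEdge.isLabeledBy_of_mem_image he'.1)

open Classical in
/-- If a Label Cover instance `(E, σ)` has a total labeling assigning exactly one
label to each vertex (`l` on `V`, `l'` on `W`) that satisfies every edge, then the
spanning tree `T` of `G'` obtained by selecting from each component `G_{v,w}` the
unique label edge `(v, u^{v,w}_{l v, l' w})` (together with zero-cost dummy edges)
contains no two label-distinct label edges incident to a common vertex of `G`;
hence for every scenario `S` — a family of pairwise label-distinct label edges all
sharing a vertex `v ∈ V` or all sharing a vertex `w ∈ W`, each given cost `1`,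
all other edges cost `0` — the cost of `T` under `S` is at most `1`. -/
theorem stmt_16 {V W : Type} [DecidableEq V] [DecidableEq W]
    (E : Finset (V × W)) (σ : V → W → ℕ → Option ℕ)
    (l : V → ℕ) (l' : W → ℕ)
    (hsat : ∀ p ∈ E, σ p.1 p.2 (l p.1) = some (l' p.2))
    (T : Finset (LabelEdge V W))
    (hT : T = E.image (fun p => ((p.1, p.2), (l p.1, l' p.2))))
    (S : Finset (LabelEdge V W))
    (hdistinct : ∀ e ∈ S, ∀ e' ∈ S, e ≠ e' → LabelDistinct e e')
    (hshare : (∃ v : V, ∀ e ∈ S, e.1.1 = v) ∨ (∃ w : W, ∀ e ∈ S, e.1.2 = w)) :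
    ∑ e ∈ T, (if e ∈ S then (1 : ℝ) else 0) ≤ 1 :=
  stmt_16_general E l l' T hT S hdistinct hshare
end

section
/- In the reduction from Set Cover to 2-Stage Spanning Tree: given a ground set U = {1,…,n} and subsets U₁,…,U_m covering U, build the complete graph on vertices {u₁,…,u_m, 1,…,n, r}, first-stage costs: c(r,u_i) = 1 and all other edges cost m+1; for each j ∈ U a scenario S_j in which edges of the cut (T_j, V∖T_j), with T_j = {j} ∪ {u_i : j ∈ U_i}, cost m+1 and all other edges cost 0. Then there is a set cover of size at most k ≤ m if and only if there is a first-stage edge set E₁ and second-stage completions whose maximum 2-stage cost over all scenarios is at most k. -/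
/-!
A cover `I` yields the solution that buys the edges `(r, u_i)`, `i ∈ I`, in the first stage
and, in scenario `S_j`, attaches every other vertex by a free edge inside its side of the cut
`T_j` (the vertices of `T_j` through some `u_i` with `i ∈ I` and `j ∈ U i`). Conversely, a
solution of cost at most `k ≤ m` buys no edge of cost `m + 1`: its first stage consists of at
most `k` edges `(r, u_i)`, and in scenario `S_j` the path from `j` to `r` must leave `T_j`
through one of them, whose `u_i ∈ T_j` then has `j ∈ U i`.
-/

/-- Vertices of the graph in the Set Cover reduction: `m` subset-vertices `u_i`,
`n` element-vertices, and a root `r`. -/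
abbrev SCVtx (m n : ℕ) : Type := Fin m ⊕ Fin n ⊕ Unit

/-- The root vertex `r`. -/
def SCroot (m n : ℕ) : SCVtx m n := Sum.inr (Sum.inr ())

open Classical in
/-- First-stage costs: edges `(r, u_i)` cost `1`, all other edges cost `m + 1`. -/
noncomputable def SCcost1 (m n : ℕ) (e : Sym2 (SCVtx m n)) : ℝ :=
  if SCroot m n ∈ e ∧ ∃ i : Fin m, Sum.inl i ∈ e then 1 else m + 1

/-- The side `T_j = {j} ∪ {u_i : j ∈ U i}` of the cut of scenario `S_j`. -/
def SCside (m n : ℕ) (U : Fin m → Finset (Fin n)) (j : Fin n) : Set (SCVtx m n) :=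
  {v | v = Sum.inr (Sum.inl j) ∨ ∃ i : Fin m, v = Sum.inl i ∧ j ∈ U i}

open Classical in
/-- Second-stage costs under scenario `S_j`: edges of the cut `(T_j, V ∖ T_j)` cost
`m + 1`, all other edges cost `0`. -/
noncomputable def SCcost2 (m n : ℕ) (U : Fin m → Finset (Fin n)) (j : Fin n)
    (e : Sym2 (SCVtx m n)) : ℝ :=
  if ∃ a b, e = s(a, b) ∧ a ∈ SCside m n U j ∧ b ∉ SCside m n U j then m + 1 else 0

namespace SimpleGraph

variable {V : Type*} (r : V) {p : V → V} {d : V → ℕ}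

lemma reachable_of_parent (hd : ∀ v, v ≠ r → d (p v) < d v) (v : V) :
    (fromEdgeSet (Set.range fun v ↦ s(v, p v))).Reachable v r := by
  induction h : d v using Nat.strong_induction_on generalizing v with
  | _ N ih =>
    by_cases hv : v = r
    · rw [hv]
    · have hlt := hd v hv
      have hadj : (fromEdgeSet (Set.range fun v ↦ s(v, p v))).Adj v (p v) :=
        ⟨⟨v, rfl⟩, fun h ↦ hlt.ne (congrArg d h.symm)⟩
      exact hadj.reachable.trans (ih _ (h ▸ hlt) _ rfl)

lemma isTree_fromEdgeSet_range_parent [Finite V] (hpr : p r = r)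
    (hd : ∀ v, v ≠ r → d (p v) < d v) :
    (fromEdgeSet (Set.range fun v ↦ s(v, p v))).IsTree := by
  classical
  rw [isTree_iff_connected_and_card]
  refine ⟨(connected_iff_exists_forall_reachable _).2
    ⟨r, fun v ↦ (reachable_of_parent r hd v).symm⟩, ?_⟩
  let f : {v // v ≠ r} → (fromEdgeSet (Set.range fun v ↦ s(v, p v))).edgeSet := fun v ↦
    ⟨s(v.1, p v.1), by
      rw [edgeSet_fromEdgeSet]
      exact ⟨⟨v.1, rfl⟩,
        fun h ↦ (hd v.1 v.2).ne (congrArg d (Sym2.mk_isDiag_iff.1 h).symm)⟩⟩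
  have hf : Function.Bijective f := by
    constructor
    · rintro ⟨v, hv⟩ ⟨w, hw⟩ h
      simp only [f, Subtype.mk.injEq, Sym2.eq_iff] at h
      rcases h with ⟨rfl, -⟩ | ⟨rfl, hw'⟩
      · rfl
      · have := (hd _ hv).trans (hd _ hw)
        rw [hw'] at this
        exact absurd this (lt_irrefl _)
    · rintro ⟨e, he⟩
      rw [edgeSet_fromEdgeSet] at he
      obtain ⟨⟨v, rfl⟩, hdiag⟩ := he
      refine ⟨⟨v, ?_⟩, rfl⟩
      rintro rfl
      exact hdiag (by simp [hpr])
  rw [← Nat.card_congr (Equiv.ofBijective f hf), ← Finite.card_option,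
    Nat.card_congr (Equiv.optionSubtypeNe r)]

end SimpleGraph

open SimpleGraph

variable {m n : ℕ}

lemma inl_mem_SCside_iff {U : Fin m → Finset (Fin n)} {j : Fin n} {i : Fin m} :
    (Sum.inl i : SCVtx m n) ∈ SCside m n U j ↔ j ∈ U i := by
  simp [SCside]

lemma SCroot_notMem_SCside (U : Fin m → Finset (Fin n)) (j : Fin n) :
    SCroot m n ∉ SCside m n U j := by
  simp [SCside, SCroot]

lemma one_le_SCcost1 (e : Sym2 (SCVtx m n)) : 1 ≤ SCcost1 m n e := by
  unfold SCcost1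
  split_ifs <;> simp

lemma SCcost2_nonneg (U : Fin m → Finset (Fin n)) (j : Fin n) (e : Sym2 (SCVtx m n)) :
    0 ≤ SCcost2 m n U j e := by
  unfold SCcost2
  split_ifs <;> positivity

lemma exists_eq_of_SCcost1_le {e : Sym2 (SCVtx m n)} (he : SCcost1 m n e ≤ m) :
    ∃ i : Fin m, e = s(SCroot m n, Sum.inl i) := by
  unfold SCcost1 at he
  split_ifs at he with h
  · obtain ⟨hr, i, hi⟩ := h
    exact ⟨i, (Sym2.mem_and_mem_iff (by simp [SCroot])).1 ⟨hr, hi⟩⟩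
  · linarith

lemma mem_SCside_of_SCcost2_le {U : Fin m → Finset (Fin n)} {j : Fin n} {a b : SCVtx m n}
    (hab : SCcost2 m n U j s(a, b) ≤ m) (ha : a ∈ SCside m n U j) : b ∈ SCside m n U j := by
  by_contra hb
  unfold SCcost2 at hab
  rw [if_pos ⟨a, b, rfl, ha, hb⟩] at hab
  linarith

section Cover

variable (U : Fin m → Finset (Fin n)) (I : Finset (Fin m)) (c : Fin n → Fin m) (j : Fin n)

def SCparent : SCVtx m n → SCVtx m n
  | Sum.inl i => if i ∉ I ∧ j ∈ U i then Sum.inl (c j) else SCroot m n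
  | Sum.inr (Sum.inl j') => if j' = j then Sum.inl (c j) else SCroot m n
  | Sum.inr (Sum.inr _) => SCroot m n

def SCrank : SCVtx m n → ℕ
  | Sum.inl i => if i = c j then 1 else 2
  | Sum.inr (Sum.inl _) => 3
  | Sum.inr (Sum.inr _) => 0

lemma SCparent_root : SCparent U I c j (SCroot m n) = SCroot m n := rfl

lemma SCparent_inl_of_mem {i : Fin m} (hi : i ∈ I) :
    SCparent U I c j (Sum.inl i) = SCroot m n := by
  simp [SCparent, hi]

variable {U I c}

lemma SCrank_SCparent_lt (hcI : ∀ j, c j ∈ I) {v : SCVtx m n} (hv : v ≠ SCroot m n) :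
    SCrank c j (SCparent U I c j v) < SCrank c j v := by
  rcases v with i | j' | ⟨⟩
  · by_cases h : i ∉ I ∧ j ∈ U i
    · have hne : i ≠ c j := by rintro rfl; exact h.1 (hcI j)
      simp [SCparent, SCrank, h, hne]
    · simp only [SCparent, SCrank, h, if_false, SCroot]
      split <;> omega
  · by_cases h : j' = j <;> simp [SCparent, SCrank, h, SCroot]
  · exact absurd rfl hv

lemma SCparent_mem_SCside_iff (hcU : ∀ j, j ∈ U (c j)) {v : SCVtx m n}
    (hv : ∀ i ∈ I, v ≠ Sum.inl i) :
    SCparent U I c j v ∈ SCside m n U j ↔ v ∈ SCside m n U j := by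
  rcases v with i | j' | ⟨⟩
  · have hi : i ∉ I := fun hi ↦ hv i hi rfl
    by_cases h : j ∈ U i <;>
      simp [SCparent, hi, h, hcU j, inl_mem_SCside_iff, SCroot_notMem_SCside]
  · by_cases h : j' = j <;> simp [SCparent, SCside, h, SCroot, hcU j]
  · simp [SCparent, SCside, SCroot]

end Cover

lemma sum_SCcost1_image (I : Finset (Fin m)) :
    ∑ e ∈ I.image (fun i ↦ s(SCroot m n, Sum.inl i)), SCcost1 m n e = I.card := by
  rw [Finset.sum_image fun i _ i' _ h ↦ Sum.inl_injective (Sym2.congr_right.1 h)]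
  have h1 (i : Fin m) : SCcost1 m n s(SCroot m n, Sum.inl i) = 1 :=
    if_pos ⟨Sym2.mem_mk_left _ _, i, Sym2.mem_mk_right _ _⟩
  simp [h1]

lemma exists_SCsolution_of_cover (U : Fin m → Finset (Fin n)) (I : Finset (Fin m))
    (hI : ∀ j : Fin n, ∃ i ∈ I, j ∈ U i) :
    ∃ (E₁ : Finset (Sym2 (SCVtx m n))) (E₂ : Fin n → Finset (Sym2 (SCVtx m n))),
      (∀ j, (fromEdgeSet ((↑(E₁ ∪ E₂ j) : Set (Sym2 (SCVtx m n))))).IsTree) ∧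
      (∀ j, ∑ e ∈ E₁, SCcost1 m n e + ∑ e ∈ E₂ j, SCcost2 m n U j e = I.card) := by
  classical
  choose c hcI hcU using hI
  set E₁ := I.image fun i ↦ s(SCroot m n, Sum.inl i)
  set T : Fin n → Finset (Sym2 (SCVtx m n)) := fun j ↦
    Finset.univ.image fun v ↦ s(v, SCparent U I c j v)
  have hE₁T (j : Fin n) : E₁ ⊆ T j := by
    simp only [E₁, T, Finset.image_subset_iff, Finset.mem_image, Finset.mem_univ, true_and]
    exact fun i hi ↦ ⟨Sum.inl i, by rw [SCparent_inl_of_mem U I c j hi, Sym2.eq_swap]⟩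
  refine ⟨E₁, fun j ↦ T j \ E₁, fun j ↦ ?_, fun j ↦ ?_⟩
  · rw [Finset.union_sdiff_of_subset (hE₁T j)]
    convert isTree_fromEdgeSet_range_parent (SCroot m n) (SCparent_root U I c j)
      (fun _ ↦ SCrank_SCparent_lt j hcI)
    ext
    simp [T, eq_comm]
  · rw [sum_SCcost1_image, add_eq_left]
    refine Finset.sum_eq_zero fun e he ↦ ?_
    simp only [T, Finset.mem_sdiff, Finset.mem_image, Finset.mem_univ, true_and] at he
    obtain ⟨⟨v, rfl⟩, hvE₁⟩ := he
    have hv : ∀ i ∈ I, v ≠ Sum.inl i := by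
      rintro i hi rfl
      rw [SCparent_inl_of_mem U I c j hi, Sym2.eq_swap] at hvE₁
      exact hvE₁ (Finset.mem_image_of_mem _ hi)
    have hside := SCparent_mem_SCside_iff j hcU hv
    unfold SCcost2
    rw [if_neg]
    rintro ⟨a, b, hab, ha, hb⟩
    rcases Sym2.eq_iff.1 hab with ⟨rfl, rfl⟩ | ⟨rfl, rfl⟩
    · exact hb (hside.2 ha)
    · exact hb (hside.1 ha)

lemma card_le_sum_SCcost1 (E : Finset (Sym2 (SCVtx m n))) :
    (E.card : ℝ) ≤ ∑ e ∈ E, SCcost1 m n e := by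
  simpa using E.card_nsmul_le_sum _ 1 fun e _ ↦ one_le_SCcost1 e

lemma card_filter_mem_le (E : Finset (Sym2 (SCVtx m n))) :
    (Finset.univ.filter fun i : Fin m ↦ s(SCroot m n, Sum.inl i) ∈ E).card ≤ E.card :=
  Finset.card_le_card_of_injOn (fun i ↦ s(SCroot m n, Sum.inl i))
    (fun _ hi ↦ (Finset.mem_filter.1 hi).2)
    (fun _ _ _ _ h ↦ Sum.inl_injective (Sym2.congr_right.1 h))

lemma exists_mem_of_connected {U : Fin m → Finset (Fin n)} {j : Fin n}
    {E₁ E₂ : Finset (Sym2 (SCVtx m n))}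
    (hconn : (fromEdgeSet ((↑(E₁ ∪ E₂) : Set (Sym2 (SCVtx m n))))).Connected)
    (hE₁ : ∀ e ∈ E₁, SCcost1 m n e ≤ m)
    (hE₂ : ∀ e ∈ E₂, SCcost2 m n U j e ≤ m) :
    ∃ i, s(SCroot m n, Sum.inl i) ∈ E₁ ∧ j ∈ U i := by
  obtain ⟨w⟩ := hconn.preconnected (Sum.inr (Sum.inl j)) (SCroot m n)
  obtain ⟨⟨⟨a, b⟩, hab⟩, -, ha, hb⟩ :=
    w.exists_boundary_dart (SCside m n U j) (Or.inl rfl) (SCroot_notMem_SCside U j)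
  obtain ⟨hmem, -⟩ := (fromEdgeSet_adj _).1 hab
  rcases Finset.mem_union.1 hmem with hmem | hmem
  · obtain ⟨i, hi⟩ := exists_eq_of_SCcost1_le (hE₁ _ hmem)
    rcases Sym2.eq_iff.1 hi with ⟨rfl, -⟩ | ⟨rfl, rfl⟩
    · exact absurd ha (SCroot_notMem_SCside U j)
    · exact ⟨i, by rwa [Sym2.eq_swap], inl_mem_SCside_iff.1 ha⟩
  · exact absurd (mem_SCside_of_SCcost2_le (hE₂ _ hmem) ha) hb

theorem stmt_17_general (m n k : ℕ) (hn : 0 < n) (hk : k ≤ m)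
    (U : Fin m → Finset (Fin n)) :
    (∃ I : Finset (Fin m), I.card ≤ k ∧ ∀ j : Fin n, ∃ i ∈ I, j ∈ U i) ↔
    (∃ (E₁ : Finset (Sym2 (SCVtx m n))) (E₂ : Fin n → Finset (Sym2 (SCVtx m n))),
      (∀ j : Fin n, (SimpleGraph.fromEdgeSet ((↑(E₁ ∪ E₂ j) : Set (Sym2 (SCVtx m n))))).IsTree) ∧
      (∀ j : Fin n,
        ∑ e ∈ E₁, SCcost1 m n e + ∑ e ∈ E₂ j, SCcost2 m n U j e ≤ (k : ℝ))) := by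
  constructor
  · rintro ⟨I, hIk, hI⟩
    obtain ⟨E₁, E₂, htree, hcost⟩ := exists_SCsolution_of_cover U I hI
    exact ⟨E₁, E₂, htree, fun j ↦ (hcost j).trans_le (by exact_mod_cast hIk)⟩
  · rintro ⟨E₁, E₂, htree, hcost⟩
    have hsum₁ : ∑ e ∈ E₁, SCcost1 m n e ≤ k :=
      le_of_add_le_of_nonneg_left (hcost ⟨0, hn⟩)
        (Finset.sum_nonneg fun e _ ↦ SCcost2_nonneg U _ e)
    have hsum₂ (j : Fin n) : ∑ e ∈ E₂ j, SCcost2 m n U j e ≤ k :=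
      le_of_add_le_of_nonneg_right (hcost j)
        (Finset.sum_nonneg fun e _ ↦ zero_le_one.trans (one_le_SCcost1 e))
    have hkm : (k : ℝ) ≤ m := by exact_mod_cast hk
    have hE₁ : ∀ e ∈ E₁, SCcost1 m n e ≤ m := fun e he ↦
      ((Finset.single_le_sum (fun e _ ↦ zero_le_one.trans (one_le_SCcost1 e)) he).trans
        hsum₁).trans hkm
    have hE₂ (j : Fin n) : ∀ e ∈ E₂ j, SCcost2 m n U j e ≤ m := fun e he ↦
      ((Finset.single_le_sum (fun e _ ↦ SCcost2_nonneg U j e) he).trans (hsum₂ j)).trans hkm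
    refine ⟨Finset.univ.filter fun i ↦ s(SCroot m n, Sum.inl i) ∈ E₁, ?_, fun j ↦ ?_⟩
    · exact (card_filter_mem_le E₁).trans
        (by exact_mod_cast (card_le_sum_SCcost1 E₁).trans hsum₁)
    · obtain ⟨i, hi, hj⟩ := exists_mem_of_connected (htree j).connected hE₁ (hE₂ j)
      exact ⟨i, Finset.mem_filter.2 ⟨Finset.mem_univ i, hi⟩, hj⟩

/-- Set Cover reduces to 2-Stage Spanning Tree: on the complete graph over
`{u₁,…,u_m, 1,…,n, r}` with the costs above, there is a subcollection of size at
most `k ≤ m` covering the ground set iff there are a first-stage edge set `E₁` and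
second-stage completions `E₂^{S_j}` such that `E₁ ∪ E₂^{S_j}` is a spanning tree for
every scenario `S_j` and the maximum 2-stage cost over all scenarios is at most `k`. -/
theorem stmt_17 (m n k : ℕ) (hm : 0 < m) (hn : 0 < n) (hk : k ≤ m)
    (U : Fin m → Finset (Fin n)) (hcover : ∀ j : Fin n, ∃ i, j ∈ U i) :
    (∃ I : Finset (Fin m), I.card ≤ k ∧ ∀ j : Fin n, ∃ i ∈ I, j ∈ U i) ↔
    (∃ (E₁ : Finset (Sym2 (SCVtx m n))) (E₂ : Fin n → Finset (Sym2 (SCVtx m n))),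
      (∀ j : Fin n, (SimpleGraph.fromEdgeSet ((↑(E₁ ∪ E₂ j) : Set (Sym2 (SCVtx m n))))).IsTree) ∧
      (∀ j : Fin n,
        ∑ e ∈ E₁, SCcost1 m n e + ∑ e ∈ E₂ j, SCcost2 m n U j e ≤ (k : ℝ))) :=
  stmt_17_general m n k hn hk U
end

section
/- In the 3-SAT reduction graph: G consists of m series-connected gadgets G_i, each with vertices s_i, v₁^i, v₂^i, v₃^i, t_i, literal edges (s_i, v_j^i) and back edges (v_j^i, t_i) of cost -1 in all scenarios (t_i identified with s_{i+1}); for each pair of literal edges corresponding to contradictory literals there is a scenario giving those two edges cost 4m - 1 and all other edges cost -1. Then: (a) every spanning tree T of G has max_{S} ∑_{e∈T} c^S_e ≥ 0; (b) if the 3-SAT instance is satisfiable there is a spanning tree with max-scenario cost 0; (c) if unsatisfiable, every spanning tree has max-scenario cost ≥ 4m. -/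
/-!
Every spanning tree of `G` has `4m` edges, so in the scenario of a pair `(p, q)` it costs
`4m (k - 1)`, where `k` is the number of literal edges of `p` and `q` it contains. Each gadget
separates the chain, so a spanning tree contains a literal edge of every clause: this gives
`k ≥ 1` in a suitable scenario (a) and, when the instance is unsatisfiable, two literal edges of
contradictory occurrences, i.e. `k = 2` (c). A satisfying assignment picks a true occurrence in
every clause; their literal edges together with all back edges form a spanning tree with `k ≤ 1`
in every scenario (b).
-/

/-- Vertices of the graph in the 3-SAT reduction: the chain vertices
`s_1, …, s_m, t_m` (with `t_i` identified with `s_{i+1}`) and the literal vertices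
`v_j^i` for clause `i` and position `j`. -/
abbrev SatVtx (m : ℕ) : Type := Fin (m + 1) ⊕ (Fin m × Fin 3)

/-- The literal edge `(s_i, v_j^i)` corresponding to the `j`-th literal of clause `i`. -/
def litEdge {m : ℕ} (p : Fin m × Fin 3) : Sym2 (SatVtx m) :=
  s(Sum.inl p.1.castSucc, Sum.inr p)

/-- The back edge `(v_j^i, t_i)`, where `t_i = s_{i+1}`. -/
def backEdge {m : ℕ} (p : Fin m × Fin 3) : Sym2 (SatVtx m) :=
  s(Sum.inr p, Sum.inl p.1.succ)

/-- The edge set of the reduction graph `G`: all literal and back edges. -/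
def satEdges (m : ℕ) : Set (Sym2 (SatVtx m)) :=
  {e | ∃ p : Fin m × Fin 3, e = litEdge p ∨ e = backEdge p}

/-- Two literal occurrences are contradictory if they involve the same variable with
opposite signs. -/
def Contra {nv m : ℕ} (cl : Fin m → Fin 3 → Fin nv × Bool)
    (p q : Fin m × Fin 3) : Prop :=
  (cl p.1 p.2).1 = (cl q.1 q.2).1 ∧ (cl p.1 p.2).2 = !(cl q.1 q.2).2

/-- Costs under the scenario associated with the contradictory pair `(p, q)`: the two
literal edges of `p` and `q` cost `4m - 1`, all other edges cost `-1`. -/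
def scenCost {m : ℕ} (p q : Fin m × Fin 3) (e : Sym2 (SatVtx m)) : ℝ :=
  if e = litEdge p ∨ e = litEdge q then 4 * m - 1 else -1

open SimpleGraph Finset

variable {m : ℕ}

lemma litEdge_injective : Function.Injective (litEdge (m := m)) := by
  intro p q h
  simp only [litEdge, Sym2.eq_iff, Sum.inl.injEq, Sum.inr.injEq, reduceCtorEq, and_false,
    or_false] at h
  exact h.2

lemma backEdge_injective : Function.Injective (backEdge (m := m)) := by
  intro p q h
  simp only [backEdge, Sym2.eq_iff, Sum.inl.injEq, Sum.inr.injEq, reduceCtorEq, and_false,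
    or_false] at h
  exact h.1

lemma litEdge_ne_backEdge (p q : Fin m × Fin 3) : litEdge p ≠ backEdge q := by
  simp only [litEdge, backEdge, ne_eq, Sym2.eq_iff, reduceCtorEq, false_and, Sum.inl.injEq,
    Sum.inr.injEq, false_or, not_and]
  rintro h rfl
  simpa using congrArg Fin.val h

lemma not_isDiag_of_mem_satEdges {e : Sym2 (SatVtx m)} (he : e ∈ satEdges m) : ¬ e.IsDiag := by
  obtain ⟨p, rfl | rfl⟩ := he <;> simp [litEdge, backEdge]

lemma edgeSet_fromEdgeSet_of_subset {T : Set (Sym2 (SatVtx m))} (hT : T ⊆ satEdges m) :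
    (fromEdgeSet T).edgeSet = T := by
  rw [edgeSet_fromEdgeSet, sdiff_eq_left, Set.disjoint_left]
  exact fun e he => not_isDiag_of_mem_satEdges (hT he)

lemma card_satVtx : Nat.card (SatVtx m) = 4 * m + 1 := by
  simp only [Nat.card_eq_fintype_card, Fintype.card_sum, Fintype.card_fin, Fintype.card_prod]
  ring

lemma isTree_fromEdgeSet_iff {T : Finset (Sym2 (SatVtx m))} (hT : ↑T ⊆ satEdges m) :
    (fromEdgeSet (T : Set (Sym2 (SatVtx m)))).IsTree ↔
      (fromEdgeSet (T : Set (Sym2 (SatVtx m)))).Connected ∧ #T = 4 * m := by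
  rw [isTree_iff_connected_and_card, edgeSet_fromEdgeSet_of_subset hT, card_satVtx,
    Nat.card_coe_set_eq, Set.ncard_coe_finset, add_left_inj]

def before (i : Fin m) : Set (SatVtx m) :=
  {v | Sum.elim (fun k => k.val ≤ i.val) (fun p => p.1.val < i.val) v}

lemma exists_litEdge_eq_of_crossing {i : Fin m} {a b : SatVtx m} (he : s(a, b) ∈ satEdges m)
    (ha : a ∈ before i) (hb : b ∉ before i) : ∃ j, s(a, b) = litEdge (i, j) := by
  obtain ⟨p, hp | hp⟩ := he
  · have hi : p.1 = i := by
      rw [litEdge, Sym2.eq_iff] at hp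
      rcases hp with ⟨rfl, rfl⟩ | ⟨rfl, rfl⟩ <;> simp [before] at ha hb <;> exact Fin.ext (by omega)
    exact ⟨p.2, by rw [hp, ← hi]⟩
  · rw [backEdge, Sym2.eq_iff] at hp
    rcases hp with ⟨rfl, rfl⟩ | ⟨rfl, rfl⟩ <;> simp [before] at ha hb <;> omega

lemma exists_litEdge_mem {T : Finset (Sym2 (SatVtx m))} (hT : ↑T ⊆ satEdges m)
    (hconn : (fromEdgeSet (T : Set (Sym2 (SatVtx m)))).Connected) (i : Fin m) :
    ∃ j, litEdge (i, j) ∈ T := by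
  obtain ⟨walk⟩ := hconn.preconnected (Sum.inl i.castSucc) (Sum.inl i.succ)
  obtain ⟨d, -, hd, hd'⟩ := walk.exists_boundary_dart (before i) (by simp [before])
    (by simp [before])
  have hdT : s(d.fst, d.snd) ∈ T := ((fromEdgeSet_adj _).mp d.adj).1
  obtain ⟨j, hj⟩ := exists_litEdge_eq_of_crossing (hT hdT) hd hd'
  exact ⟨j, hj ▸ hdT⟩

lemma sum_scenCost (T : Finset (Sym2 (SatVtx m))) (p q : Fin m × Fin 3) :
    ∑ e ∈ T, scenCost p q e = 4 * m * #(T ∩ {litEdge p, litEdge q}) - #T := by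
  have hcost : ∀ e, scenCost p q e =
      (if e ∈ ({litEdge p, litEdge q} : Finset _) then (4 * m : ℝ) else 0) - 1 := by
    intro e
    simp only [scenCost, mem_insert, mem_singleton]
    split_ifs <;> ring
  simp only [hcost, sum_sub_distrib, sum_ite_mem, sum_const, nsmul_eq_mul, mul_one]
  ring

lemma sum_scenCost_of_isTree {T : Finset (Sym2 (SatVtx m))} (hT : ↑T ⊆ satEdges m)
    (htree : (fromEdgeSet (T : Set (Sym2 (SatVtx m)))).IsTree) (p q : Fin m × Fin 3) :
    ∑ e ∈ T, scenCost p q e = 4 * m * ((#(T ∩ {litEdge p, litEdge q}) : ℝ) - 1) := by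
  rw [sum_scenCost, ((isTree_fromEdgeSet_iff hT).mp htree).2]
  push_cast
  ring

variable {nv : ℕ} {cl : Fin m → Fin 3 → Fin nv × Bool}

lemma Contra.ne {p q : Fin m × Fin 3} (h : Contra cl p q) : p ≠ q := by
  rintro rfl
  simpa using h.2

lemma Contra.not_both_true {A : Fin nv → Bool} {p q : Fin m × Fin 3} (h : Contra cl p q)
    (hp : A (cl p.1 p.2).1 = (cl p.1 p.2).2) (hq : A (cl q.1 q.2).1 = (cl q.1 q.2).2) : False := by
  rw [h.1, hq] at hp
  simpa using hp.trans h.2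

lemma exists_contra
    (hocc : ∀ x : Fin nv, (∃ i j, cl i j = (x, true)) ∧ (∃ i j, cl i j = (x, false)))
    (p : Fin m × Fin 3) : ∃ q, Contra cl p q := by
  obtain ⟨⟨i, j, hpos⟩, ⟨i', j', hneg⟩⟩ := hocc (cl p.1 p.2).1
  cases hb : (cl p.1 p.2).2
  · exact ⟨(i, j), by simp [Contra, hpos, hb]⟩
  · exact ⟨(i', j'), by simp [Contra, hneg, hb]⟩

lemma exists_satisfying_of_consistent (sel : Fin m × Fin 3 → Prop)
    (hcover : ∀ i, ∃ j, sel (i, j)) (hcons : ∀ p q, sel p → sel q → ¬ Contra cl p q) :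
    ∃ A : Fin nv → Bool, ∀ i, ∃ j, A (cl i j).1 = (cl i j).2 := by
  classical
  refine ⟨fun x => decide (∃ p, sel p ∧ cl p.1 p.2 = (x, true)), fun i => ?_⟩
  obtain ⟨j, hj⟩ := hcover i
  refine ⟨j, ?_⟩
  cases hb : (cl i j).2
  · rw [decide_eq_false_iff_not]
    rintro ⟨p, hp, hpx⟩
    exact hcons p (i, j) hp hj ⟨by rw [hpx], by rw [hpx, hb]; rfl⟩
  · exact decide_eq_true ⟨(i, j), hj, by rw [← hb]⟩

def selectionTree (w : Fin m → Fin 3) : Finset (Sym2 (SatVtx m)) :=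
  univ.image backEdge ∪ univ.image fun i => litEdge (i, w i)

lemma selectionTree_subset (w : Fin m → Fin 3) : ↑(selectionTree w) ⊆ satEdges m := by
  intro e he
  simp only [selectionTree, coe_union, coe_image, coe_univ, Set.image_univ, Set.mem_union,
    Set.mem_range] at he
  rcases he with ⟨p, rfl⟩ | ⟨i, rfl⟩
  exacts [⟨p, Or.inr rfl⟩, ⟨(i, w i), Or.inl rfl⟩]

lemma litEdge_mem_selectionTree_iff {w : Fin m → Fin 3} {p : Fin m × Fin 3} :
    litEdge p ∈ selectionTree w ↔ p.2 = w p.1 := by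
  simp only [selectionTree, mem_union, mem_image, mem_univ, true_and,
    (litEdge_ne_backEdge _ _).symm, exists_false, false_or, litEdge_injective.eq_iff]
  constructor
  · rintro ⟨i, rfl⟩
    rfl
  · intro h
    exact ⟨p.1, by rw [← h]⟩

lemma card_selectionTree (w : Fin m → Fin 3) : #(selectionTree w) = 4 * m := by
  have hdisj : Disjoint (univ.image backEdge) (univ.image fun i => litEdge (i, w i)) := by
    simp only [Finset.disjoint_left, mem_image, mem_univ, true_and, not_exists]
    rintro _ ⟨p, rfl⟩ i h
    exact litEdge_ne_backEdge _ _ h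
  rw [selectionTree, card_union_of_disjoint hdisj, card_image_of_injective _ backEdge_injective,
    card_image_of_injective (f := fun i => litEdge (i, w i)) _
      (litEdge_injective.comp fun i i' h => congrArg Prod.fst h)]
  simp only [card_univ, Fintype.card_prod, Fintype.card_fin]
  ring

lemma selectionTree_connected (w : Fin m → Fin 3) :
    (fromEdgeSet (selectionTree w : Set (Sym2 (SatVtx m)))).Connected := by
  set G := fromEdgeSet (selectionTree w : Set (Sym2 (SatVtx m)))
  have hback : ∀ p, G.Adj (Sum.inr p) (Sum.inl p.1.succ) := fun p =>
    (fromEdgeSet_adj _).mpr ⟨by simp [selectionTree, backEdge], Sum.inr_ne_inl⟩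
  have hlit : ∀ i, G.Adj (Sum.inl i.castSucc) (Sum.inr (i, w i)) := fun i =>
    (fromEdgeSet_adj _).mpr ⟨by simp [selectionTree, litEdge], Sum.inl_ne_inr⟩
  have hchain : ∀ k, G.Reachable (Sum.inl 0) (Sum.inl k) := by
    refine Fin.induction (Reachable.refl _) fun i hi => ?_
    exact hi.trans ((hlit i).reachable.trans (hback (i, w i)).reachable)
  refine (connected_iff_exists_forall_reachable G).mpr ⟨Sum.inl 0, ?_⟩
  rintro (k | p)
  exacts [hchain k, (hchain _).trans (hback p).symm.reachable]

lemma selectionTree_isTree (w : Fin m → Fin 3) :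
    (fromEdgeSet (selectionTree w : Set (Sym2 (SatVtx m)))).IsTree :=
  (isTree_fromEdgeSet_iff (selectionTree_subset w)).mpr
    ⟨selectionTree_connected w, card_selectionTree w⟩

section Scenarios

variable {T : Finset (Sym2 (SatVtx m))} (hT : ↑T ⊆ satEdges m)
  (htree : (fromEdgeSet (T : Set (Sym2 (SatVtx m)))).IsTree)
include hT htree

lemma sum_scenCost_nonneg {p : Fin m × Fin 3} (hp : litEdge p ∈ T) (q : Fin m × Fin 3) :
    0 ≤ ∑ e ∈ T, scenCost p q e := by
  have hcard : (1 : ℝ) ≤ #(T ∩ {litEdge p, litEdge q}) := by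
    exact_mod_cast card_pos.mpr ⟨litEdge p, by simp [hp]⟩
  rw [sum_scenCost_of_isTree hT htree]
  exact mul_nonneg (by positivity) (sub_nonneg.mpr hcard)

lemma four_mul_le_sum_scenCost {p q : Fin m × Fin 3} (hpq : p ≠ q) (hp : litEdge p ∈ T)
    (hq : litEdge q ∈ T) : 4 * m ≤ ∑ e ∈ T, scenCost p q e := by
  have hcard : (2 : ℝ) ≤ #(T ∩ {litEdge p, litEdge q}) := by
    have hsub : {litEdge p, litEdge q} ⊆ T ∩ {litEdge p, litEdge q} := by simp [hp, hq]
    exact_mod_cast (card_pair (litEdge_injective.ne hpq)).symm.le.trans (card_le_card hsub)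
  rw [sum_scenCost_of_isTree hT htree]
  exact le_mul_of_one_le_right (by positivity) (by linarith)

lemma sum_scenCost_nonpos {p q : Fin m × Fin 3} (hpq : litEdge p ∈ T → litEdge q ∉ T) :
    ∑ e ∈ T, scenCost p q e ≤ 0 := by
  have hcard : (#(T ∩ {litEdge p, litEdge q}) : ℝ) ≤ 1 := by
    refine Nat.cast_le_one.mpr (card_le_one.mpr fun x hx y hy => ?_)
    simp only [mem_inter, mem_insert, mem_singleton] at hx hy
    rcases hx with ⟨hx, rfl | rfl⟩ <;> rcases hy with ⟨hy, rfl | rfl⟩ <;> tauto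
  rw [sum_scenCost_of_isTree hT htree]
  exact mul_nonpos_of_nonneg_of_nonpos (by positivity) (sub_nonpos.mpr hcard)

end Scenarios

theorem stmt_18_general (nv m : ℕ) (hm : 0 < m)
    (cl : Fin m → Fin 3 → Fin nv × Bool)
    (hocc : ∀ x : Fin nv, (∃ i j, cl i j = (x, true)) ∧ (∃ i j, cl i j = (x, false))) :
    -- (a)
    (∀ T : Finset (Sym2 (SatVtx m)), ↑T ⊆ satEdges m →
      (SimpleGraph.fromEdgeSet (↑T : Set (Sym2 (SatVtx m)))).IsTree →
      ∃ p q, Contra cl p q ∧ 0 ≤ ∑ e ∈ T, scenCost p q e) ∧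
    -- (b)
    ((∃ A : Fin nv → Bool, ∀ i, ∃ j, A (cl i j).1 = (cl i j).2) →
      ∃ T : Finset (Sym2 (SatVtx m)), ↑T ⊆ satEdges m ∧
        (SimpleGraph.fromEdgeSet (↑T : Set (Sym2 (SatVtx m)))).IsTree ∧
        ∀ p q, Contra cl p q → ∑ e ∈ T, scenCost p q e ≤ 0) ∧
    -- (c)
    ((¬ ∃ A : Fin nv → Bool, ∀ i, ∃ j, A (cl i j).1 = (cl i j).2) →
      ∀ T : Finset (Sym2 (SatVtx m)), ↑T ⊆ satEdges m →
        (SimpleGraph.fromEdgeSet (↑T : Set (Sym2 (SatVtx m)))).IsTree →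
        ∃ p q, Contra cl p q ∧ (4 * m : ℝ) ≤ ∑ e ∈ T, scenCost p q e) := by
  refine ⟨fun T hT htree => ?_, fun ⟨A, hA⟩ => ?_, fun hunsat T hT htree => ?_⟩
  · obtain ⟨j, hj⟩ := exists_litEdge_mem hT htree.connected ⟨0, hm⟩
    obtain ⟨q, hq⟩ := exists_contra hocc (⟨0, hm⟩, j)
    exact ⟨_, q, hq, sum_scenCost_nonneg hT htree hj q⟩
  · choose w hw using hA
    refine ⟨selectionTree w, selectionTree_subset w, selectionTree_isTree w, fun p q hpq => ?_⟩
    refine sum_scenCost_nonpos (selectionTree_subset w) (selectionTree_isTree w) fun hp hq => ?_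
    rw [litEdge_mem_selectionTree_iff] at hp hq
    exact hpq.not_both_true (by rw [hp]; exact hw p.1) (by rw [hq]; exact hw q.1)
  · obtain ⟨p, q, hpq, hp, hq⟩ : ∃ p q, Contra cl p q ∧ litEdge p ∈ T ∧ litEdge q ∈ T := by
      by_contra! hcons
      exact hunsat (exists_satisfying_of_consistent (fun p => litEdge p ∈ T)
        (exists_litEdge_mem hT htree.connected) fun p q hp hq hpq => hcons p q hpq hp hq)
    exact ⟨p, q, hpq, four_mul_le_sum_scenCost hT htree hpq.ne hp hq⟩

/-- The 3-SAT reduction: for a 3-SAT instance with `m ≥ 1` clauses `cl` over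
variables `Fin nv`, in which every variable occurs both positively and negatively,
consider the graph with edge set `satEdges m`, back edges of cost `-1` in all
scenarios, and one scenario for each contradictory pair of literal occurrences.
Then: (a) every spanning tree has maximum scenario cost at least `0`; (b) if the
instance is satisfiable, some spanning tree has scenario cost at most `0` in every
scenario (hence, by (a), maximum scenario cost exactly `0`); (c) if the instance is
unsatisfiable, every spanning tree has maximum scenario cost at least `4m`. -/
theorem stmt_18 (nv m : ℕ) (hm : 0 < m) (hnv : 0 < nv)
    (cl : Fin m → Fin 3 → Fin nv × Bool)
    (hocc : ∀ x : Fin nv, (∃ i j, cl i j = (x, true)) ∧ (∃ i j, cl i j = (x, false))) :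
    -- (a)
    (∀ T : Finset (Sym2 (SatVtx m)), ↑T ⊆ satEdges m →
      (SimpleGraph.fromEdgeSet (↑T : Set (Sym2 (SatVtx m)))).IsTree →
      ∃ p q, Contra cl p q ∧ 0 ≤ ∑ e ∈ T, scenCost p q e) ∧
    -- (b)
    ((∃ A : Fin nv → Bool, ∀ i, ∃ j, A (cl i j).1 = (cl i j).2) →
      ∃ T : Finset (Sym2 (SatVtx m)), ↑T ⊆ satEdges m ∧
        (SimpleGraph.fromEdgeSet (↑T : Set (Sym2 (SatVtx m)))).IsTree ∧
        ∀ p q, Contra cl p q → ∑ e ∈ T, scenCost p q e ≤ 0) ∧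
    -- (c)
    ((¬ ∃ A : Fin nv → Bool, ∀ i, ∃ j, A (cl i j).1 = (cl i j).2) →
      ∀ T : Finset (Sym2 (SatVtx m)), ↑T ⊆ satEdges m →
        (SimpleGraph.fromEdgeSet (↑T : Set (Sym2 (SatVtx m)))).IsTree →
        ∃ p q, Contra cl p q ∧ (4 * m : ℝ) ≤ ∑ e ∈ T, scenCost p q e) :=
  stmt_18_general nv m hm cl hocc
end
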